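/- Let f be a three times continuously differentiable probability density on ℝ with compact support [a,b], positive on (a,b), whose critical points in (a,b) are finitely many and all nondegenerate, with local minima m_1 < ⋯ < m_{r−1} in (a,b), and let P be the probability measure with density f. Let K ⊂ (a,b) be a compact set containing all critical points of f in its interior, and let (g_n) be twice continuously differentiable functions with g_n' → f' and g_n'' → f'' uniformly, so that for all n beyond some n_0 the function g_n has exactly r − 1 local minima m̂_{n,1} < ⋯ < m̂_{n,r−1} in K. Let 𝒞̂_n be the modal clustering induced by g_n and 𝒞_0 the modal clustering induced by f. Then d_H(𝒞̂_n, 𝒞_0) → 0 as n → ∞. -/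

import Mathlib

open MeasureTheory Filter Set
open scoped ENNReal

/-- The modal (interval) clustering of `ℝ` determined by cut points `m 0 < ⋯ < m (r-2)`:
cluster `i` is the open interval `(m (i-1), m i)`, with `m (-1) = -∞` and `m (r-1) = +∞`. -/
def intervalClusters (r : ℕ) (m : Fin (r - 1) → ℝ) (i : Fin r) : Set ℝ :=
  {x : ℝ | (∀ j : Fin (r - 1), (j : ℕ) < (i : ℕ) → m j < x) ∧
           (∀ j : Fin (r - 1), (i : ℕ) ≤ (j : ℕ) → x < m j)}

/-- The Hausdorff distance between two clusterings:
`d_H(𝒞,𝒟) = max{ maxᵢ minⱼ P(Cᵢ △ Dⱼ), maxⱼ minᵢ P(Cᵢ △ Dⱼ) }`. -/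
noncomputable def clusterDistH {X : Type*} [MeasurableSpace X] {r s : ℕ}
    (P : Measure X) (C : Fin r → Set X) (D : Fin s → Set X) : ℝ≥0∞ :=
  max (⨆ i, ⨅ j, P (symmDiff (C i) (D j))) (⨆ j, ⨅ i, P (symmDiff (C i) (D j)))

open Metric
open scoped Topology

/-!
Near a nondegenerate local minimum `m j` of `f`, the derivative `f'` changes sign from `-` to `+`.
Since `gₙ' → f'` pointwise, for large `n` the derivative `gₙ'` has the same signs at `m j ± δ`,
so `gₙ` attains a local minimum within `δ` of `m j`, inside `K`. These `r - 1` local minima are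
ordered like the `m j`, so they are exactly `m̂ₙ`; hence `m̂ₙ → m`. Once every cut point has moved
by at most `δ`, corresponding clusters differ only inside the closed `δ`-thickening of the finite
set `{m j}`, whose `P`-mass tends to `0` with `δ` because `P` is finite and has no atoms.
-/

lemma eventually_nhdsGT_lt_of_deriv_neg {g : ℝ → ℝ} {x : ℝ} (h : deriv g x < 0) :
    ∀ᶠ z in 𝓝[>] x, g z < g x := by
  have hg := (differentiableAt_of_deriv_ne_zero h.ne).hasDerivAt.hasDerivWithinAt (s := Ioi x)
  have hslope := (hasDerivWithinAt_iff_tendsto_slope' self_notMem_Ioi).1 hg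
  filter_upwards [hslope.eventually_lt_const h, self_mem_nhdsWithin] with z hz (hxz : x < z)
  rw [slope_def_field, div_neg_iff] at hz
  rcases hz with ⟨-, hzx⟩ | ⟨hgz, -⟩ <;> linarith

lemma eventually_nhdsLT_lt_of_deriv_pos {g : ℝ → ℝ} {x : ℝ} (h : 0 < deriv g x) :
    ∀ᶠ z in 𝓝[<] x, g z < g x := by
  have hg := (differentiableAt_of_deriv_ne_zero h.ne').hasDerivAt.hasDerivWithinAt (s := Iio x)
  have hslope := (hasDerivWithinAt_iff_tendsto_slope' self_notMem_Iio).1 hg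
  filter_upwards [hslope.eventually_const_lt h, self_mem_nhdsWithin] with z hz hzx
  exact (slope_pos_iff_gt hzx).1 hz

lemma exists_isLocalMin_mem_Ioo_of_deriv_neg_of_deriv_pos {g : ℝ → ℝ} {c d : ℝ} (hcd : c < d)
    (hg : ContinuousOn g (Icc c d)) (hc : deriv g c < 0) (hd : 0 < deriv g d) :
    ∃ x ∈ Ioo c d, IsLocalMin g x := by
  obtain ⟨x, hx, hmin⟩ := isCompact_Icc.exists_isMinOn (nonempty_Icc.2 hcd.le) hg
  have hxc : x ≠ c := by
    rintro rfl
    obtain ⟨z, hzx, hz⟩ :=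
      ((eventually_nhdsGT_lt_of_deriv_neg hc).and (Ioo_mem_nhdsGT hcd)).exists
    exact (hmin (Ioo_subset_Icc_self hz)).not_gt hzx
  have hxd : x ≠ d := by
    rintro rfl
    obtain ⟨z, hzx, hz⟩ :=
      ((eventually_nhdsLT_lt_of_deriv_pos hd).and (Ioo_mem_nhdsLT hcd)).exists
    exact (hmin (Ioo_subset_Icc_self hz)).not_gt hzx
  have hx' : x ∈ Ioo c d := ⟨hx.1.lt_of_ne' hxc, hx.2.lt_of_ne hxd⟩
  exact ⟨x, hx', hmin.isLocalMin (Icc_mem_nhds hx'.1 hx'.2)⟩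

lemma IsLocalMin.deriv_deriv_pos {f : ℝ → ℝ} {x : ℝ} (h : IsLocalMin f x)
    (hc : ContinuousAt f x) (h₂ : deriv (deriv f) x ≠ 0) : 0 < deriv (deriv f) x := by
  refine h₂.lt_or_gt.resolve_left fun hneg => h₂ ?_
  have hmax := isLocalMax_of_deriv_deriv_neg hneg h.deriv_eq_zero hc
  have hconst : f =ᶠ[𝓝 x] fun _ => f x := by
    filter_upwards [h, hmax] with y hy₁ hy₂ using le_antisymm hy₂ hy₁
  simp [hconst.deriv.deriv_eq]

lemma IsLocalMin.eventually_sign_deriv {f : ℝ → ℝ} {x : ℝ} (h : IsLocalMin f x)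
    (hc : ContinuousAt f x) (h₂ : deriv (deriv f) x ≠ 0) :
    ∀ᶠ y in 𝓝 x, SignType.sign (deriv f y) = SignType.sign (y - x) :=
  eventually_nhdsWithin_sign_eq_of_deriv_pos (h.deriv_deriv_pos hc h₂) h.deriv_eq_zero

lemma eventually_nhdsGT_zero_neg_pos_of_sign {φ : ℝ → ℝ} {x : ℝ}
    (h : ∀ᶠ y in 𝓝 x, SignType.sign (φ y) = SignType.sign (y - x)) :
    ∀ᶠ δ in 𝓝[>] (0 : ℝ), φ (x - δ) < 0 ∧ 0 < φ (x + δ) := by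
  have hl : Tendsto (fun δ => x - δ) (𝓝 0) (𝓝 x) := by
    simpa using (continuous_sub_left x).tendsto 0
  have hr : Tendsto (fun δ => x + δ) (𝓝 0) (𝓝 x) := by
    simpa using (continuous_const_add x).tendsto 0
  filter_upwards [(hl.eventually h).filter_mono nhdsWithin_le_nhds,
    (hr.eventually h).filter_mono nhdsWithin_le_nhds, self_mem_nhdsWithin]
    with δ hδl hδr (hδ : 0 < δ)
  rw [sub_sub_cancel_left, sign_neg (neg_neg_of_pos hδ)] at hδl
  rw [add_sub_cancel_left, sign_pos hδ] at hδr
  exact ⟨sign_eq_neg_one_iff.1 hδl, sign_eq_one_iff.1 hδr⟩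

lemma StrictMono.eq_of_range_subset {α β : Type*} [LinearOrder α] [Finite α] [Preorder β]
    {c d : α → β} (hc : StrictMono c) (hd : StrictMono d) (h : range c ⊆ range d) : c = d :=
  (hc.range_inj hd).1 <| eq_of_subset_of_ncard_le h <| by
    rw [ncard_range_of_injective hc.injective, ncard_range_of_injective hd.injective]

theorem tendsto_localMins_of_tendsto_deriv {ι : Type*} {l : Filter ι} {k : ℕ} {φ : ℝ → ℝ}
    {m : Fin k → ℝ} (hm : StrictMono m) {K : Set ℝ} (hK : ∀ j, K ∈ 𝓝 (m j))
    (hsign : ∀ j, ∀ᶠ y in 𝓝 (m j), SignType.sign (φ y) = SignType.sign (y - m j))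
    {g : ι → ℝ → ℝ} (hg : ∀ i, Continuous (g i))
    (hconv : ∀ x, Tendsto (fun i => deriv (g i) x) l (𝓝 (φ x))) {m' : ι → Fin k → ℝ}
    (hm' : ∀ᶠ i in l, StrictMono (m' i) ∧ {x | x ∈ K ∧ IsLocalMin (g i) x} ⊆ range (m' i)) :
    Tendsto m' l (𝓝 m) := by
  rw [Metric.tendsto_nhds]
  intro ε hε
  have hgap : ∀ j j', ∀ᶠ δ in 𝓝[>] (0 : ℝ), j < j' → m j + δ < m j' - δ := by
    intro j j'
    by_cases hjj' : j < j'
    · filter_upwards [(eventually_lt_nhds (half_pos (sub_pos.2 (hm hjj')))).filter_mono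
        nhdsWithin_le_nhds] with δ hδ
      intro
      linarith
    · exact .of_forall fun _ h => absurd h hjj'
  obtain ⟨δ, hδ, hδε, hδsign, hδK, hδgap⟩ : ∃ δ : ℝ, 0 < δ ∧ δ < ε ∧
      (∀ j, φ (m j - δ) < 0 ∧ 0 < φ (m j + δ)) ∧ (∀ j, ball (m j) δ ⊆ K) ∧
      ∀ j j', j < j' → m j + δ < m j' - δ :=
    (eventually_mem_nhdsWithin.and <|
      ((eventually_lt_nhds hε).filter_mono nhdsWithin_le_nhds).and <|
      (eventually_all.2 fun j => eventually_nhdsGT_zero_neg_pos_of_sign (hsign j)).and <|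
      (eventually_all.2 fun j => (eventually_ball_subset (hK j)).filter_mono nhdsWithin_le_nhds).and
      (eventually_all.2 fun j => eventually_all.2 (hgap j))).exists
  have hderiv : ∀ᶠ i in l, ∀ j, deriv (g i) (m j - δ) < 0 ∧ 0 < deriv (g i) (m j + δ) :=
    eventually_all.2 fun j =>
      ((hconv _).eventually_lt_const (hδsign j).1).and ((hconv _).eventually_const_lt (hδsign j).2)
  filter_upwards [hderiv, hm'] with i hi ⟨hmono, hsub⟩
  have hc : ∀ j, ∃ x ∈ Ioo (m j - δ) (m j + δ), IsLocalMin (g i) x := fun j =>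
    exists_isLocalMin_mem_Ioo_of_deriv_neg_of_deriv_pos (by linarith) (hg i).continuousOn
      (hi j).1 (hi j).2
  choose c hc hc_min using hc
  have hc_mono : StrictMono c := fun j j' hjj' => by
    linarith [(hc j).2, (hc j').1, hδgap j j' hjj']
  have hc_eq : c = m' i := hc_mono.eq_of_range_subset hmono <| range_subset_iff.2 fun j =>
    hsub ⟨hδK j (by rw [Real.ball_eq_Ioo]; exact hc j), hc_min j⟩
  rw [dist_pi_lt_iff hε, ← hc_eq]
  intro j
  rw [Real.dist_eq, abs_lt]
  constructor <;> linarith [(hc j).1, (hc j).2]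

lemma clusterDistH_le_of_forall_le {X : Type*} [MeasurableSpace X] {r : ℕ} {P : Measure X}
    {C D : Fin r → Set X} {ε : ℝ≥0∞} (h : ∀ i, P (symmDiff (C i) (D i)) ≤ ε) :
    clusterDistH P C D ≤ ε :=
  max_le (iSup_le fun i => (iInf_le _ i).trans (h i))
    (iSup_le fun j => (iInf_le _ j).trans (h j))

lemma symmDiff_intervalClusters_subset_cthickening {r : ℕ} {m m' : Fin (r - 1) → ℝ} {δ : ℝ}
    (h : ∀ j, dist (m' j) (m j) ≤ δ) (i : Fin r) :
    symmDiff (intervalClusters r m' i) (intervalClusters r m i) ⊆ cthickening δ (range m) := by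
  intro x hx
  by_contra hx_far
  have hside : ∀ j, (m' j < x ↔ m j < x) ∧ (x < m' j ↔ x < m j) := by
    intro j
    have hfar : δ < |x - m j| := by
      by_contra! hle
      exact hx_far (mem_cthickening_of_dist_le x (m j) δ _ (mem_range_self j)
        (by rwa [Real.dist_eq]))
    have hclose := abs_le.1 (Real.dist_eq _ _ ▸ h j)
    rcases lt_abs.1 hfar with hfar | hfar <;> constructor <;> constructor <;> intro <;> linarith
  have hsame : x ∈ intervalClusters r m' i ↔ x ∈ intervalClusters r m i := by
    simp only [intervalClusters, mem_ofPred_eq, hside]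
  rw [mem_symmDiff, hsame] at hx
  tauto

theorem tendsto_clusterDistH_intervalClusters {ι : Type*} {l : Filter ι} {r : ℕ}
    {P : Measure ℝ} [IsFiniteMeasure P] [NullSingletonClass P] {m : Fin (r - 1) → ℝ}
    {m' : ι → Fin (r - 1) → ℝ} (h : Tendsto m' l (𝓝 m)) :
    Tendsto (fun i => clusterDistH P (intervalClusters r (m' i)) (intervalClusters r m)) l
      (𝓝 0) := by
  have hthick : Tendsto (fun δ => P (cthickening δ (range m))) (𝓝 0) (𝓝 0) := by
    have hm := finite_range m
    simpa [hm.measure_zero] using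
      tendsto_measure_cthickening_of_isClosed ⟨1, one_pos, measure_ne_top P _⟩ hm.isClosed
  rw [ENNReal.tendsto_nhds_zero]
  intro ε hε
  obtain ⟨δ, hδε, hδ⟩ := (((hthick.eventually (eventually_le_nhds hε)).filter_mono
    nhdsWithin_le_nhds).and (self_mem_nhdsWithin (s := Ioi 0))).exists
  filter_upwards [Metric.tendsto_nhds.1 h δ hδ] with i hi
  exact clusterDistH_le_of_forall_le fun k => (measure_mono
    (symmDiff_intervalClusters_subset_cthickening
      (fun j => (dist_le_pi_dist (m' i) m j).trans hi.le) k)).trans hδε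

theorem modal_clustering_consistent_distH_general
    (f : ℝ → ℝ) (hf : ContDiff ℝ 3 f)
    (a b : ℝ)
    (hf_int : ∫ x, f x = 1)
    (hnondeg : ∀ x ∈ Set.Ioo a b, deriv f x = 0 → deriv (deriv f) x ≠ 0)
    (P : Measure ℝ) (hP : P = volume.withDensity (fun x => ENNReal.ofReal (f x)))
    (r : ℕ)
    (m : Fin (r - 1) → ℝ) (hm_mono : StrictMono m)
    (hm_min : {x | x ∈ Set.Ioo a b ∧ IsLocalMin f x} = Set.range m)
    (K : Set ℝ)
    (hK_crit : {x | x ∈ Set.Ioo a b ∧ deriv f x = 0} ⊆ interior K)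
    (g : ℕ → ℝ → ℝ) (hg : ∀ n, ContDiff ℝ 2 (g n))
    (hg1 : TendstoUniformly (fun n => deriv (g n)) (deriv f) atTop)
    (mhat : ℕ → Fin (r - 1) → ℝ) (n₀ : ℕ)
    (hmhat_mono : ∀ n ≥ n₀, StrictMono (mhat n))
    (hmhat_min : ∀ n ≥ n₀, {x | x ∈ K ∧ IsLocalMin (g n) x} = Set.range (mhat n)) :
    Tendsto (fun n => clusterDistH P (intervalClusters r (mhat n)) (intervalClusters r m))
      atTop (nhds 0) := by
  -- A non-integrable function has Bochner integral `0`, so `∫ f = 1` forces integrability.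
  have : IsFiniteMeasure P := hP ▸ isFiniteMeasure_withDensity_ofReal
    (Integrable.of_integral_ne_zero (hf_int ▸ one_ne_zero)).hasFiniteIntegral
  have : NullSingletonClass P := hP ▸ inferInstance
  have hmin : ∀ j, m j ∈ Ioo a b ∧ IsLocalMin f (m j) := fun j => hm_min.superset (mem_range_self j)
  refine tendsto_clusterDistH_intervalClusters <| tendsto_localMins_of_tendsto_deriv hm_mono
    (fun j => mem_interior_iff_mem_nhds.1 (hK_crit ⟨(hmin j).1, (hmin j).2.deriv_eq_zero⟩))
    (fun j => (hmin j).2.eventually_sign_deriv hf.continuous.continuousAt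
      (hnondeg _ (hmin j).1 (hmin j).2.deriv_eq_zero))
    (fun n => (hg n).continuous) (fun x => hg1.tendsto_at x) ?_
  filter_upwards [eventually_ge_atTop n₀] with n hn
  exact ⟨hmhat_mono n hn, (hmhat_min n hn).subset⟩

/-- Consistency of plug-in modal clustering in the Hausdorff distance between clusterings:
if `f` is a `C³` probability density with compact support `[a,b]`, positive on `(a,b)`, with
finitely many nondegenerate critical points and local minima `m₁ < ⋯ < m_{r-1}`, and `gₙ` are
`C²` functions with `gₙ' → f'`, `gₙ'' → f''` uniformly whose local minima in `K` are
eventually `m̂_{n,1} < ⋯ < m̂_{n,r-1}`, then `d_H(𝒞̂ₙ, 𝒞₀) → 0`. -/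
theorem modal_clustering_consistent_distH
    (f : ℝ → ℝ) (hf : ContDiff ℝ 3 f)
    (a b : ℝ) (hab : a < b)
    (hf_nonneg : ∀ x, 0 ≤ f x)
    (hf_int : ∫ x, f x = 1)
    (hf_supp : tsupport f = Set.Icc a b)
    (hf_pos : ∀ x ∈ Set.Ioo a b, 0 < f x)
    (hcrit_fin : {x | x ∈ Set.Ioo a b ∧ deriv f x = 0}.Finite)
    (hnondeg : ∀ x ∈ Set.Ioo a b, deriv f x = 0 → deriv (deriv f) x ≠ 0)
    (P : Measure ℝ) (hP : P = volume.withDensity (fun x => ENNReal.ofReal (f x)))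
    (r : ℕ) (hr : 1 ≤ r)
    (m : Fin (r - 1) → ℝ) (hm_mono : StrictMono m)
    (hm_mem : ∀ j, m j ∈ Set.Ioo a b)
    (hm_min : {x | x ∈ Set.Ioo a b ∧ IsLocalMin f x} = Set.range m)
    (K : Set ℝ) (hK : IsCompact K) (hK_sub : K ⊆ Set.Ioo a b)
    (hK_crit : {x | x ∈ Set.Ioo a b ∧ deriv f x = 0} ⊆ interior K)
    (g : ℕ → ℝ → ℝ) (hg : ∀ n, ContDiff ℝ 2 (g n))
    (hg1 : TendstoUniformly (fun n => deriv (g n)) (deriv f) atTop)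
    (hg2 : TendstoUniformly (fun n => deriv (deriv (g n))) (deriv (deriv f)) atTop)
    (mhat : ℕ → Fin (r - 1) → ℝ) (n₀ : ℕ)
    (hmhat_mono : ∀ n ≥ n₀, StrictMono (mhat n))
    (hmhat_min : ∀ n ≥ n₀, {x | x ∈ K ∧ IsLocalMin (g n) x} = Set.range (mhat n)) :
    Tendsto (fun n => clusterDistH P (intervalClusters r (mhat n)) (intervalClusters r m))
      atTop (nhds 0) :=
  modal_clustering_consistent_distH_general f hf a b hf_int hnondeg P hP r m hm_mono hm_min K
    hK_crit g hg hg1 mhat n₀ hmhat_mono hmhat_min
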